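/- For finite random variables A, B, E with E available to the encoder (admissible U satisfies p(u,a,b,e) = p(a,b,e)p(u|a,e)), the maximum of I(A;B|U) − I(A;E|U) over admissible U equals I(A;B|E), achieved by U = E. -/

import Mathlib

/-!
Expanding into joint entropies gives, for every `U`, the identity
`I(A;B|U) - I(A;E|U) = I(A;B|E) - I(A;E|B,U) - I(U;B|E) + I(U;B|A,E)`.
The Markov chain `U - (A,E) - B` kills the last term, and the two subtracted terms are
nonnegative: termwise `log x ≥ 1 - 1/x` compares `I(X;Y|Z)` with the total mass of the
product `p(x,z) p(y,z) / p(z)`, which equals the total mass of `p(x,y,z)`.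
For `U = E` the chain holds because `E` is a function of `(A,E)`, and `I(A;E|E) = 0`.
-/

open Finset

/-- `w` is a probability mass function on the finite sample space `Ω`. -/
def IsPMF {Ω : Type} [Fintype Ω] (w : Ω → ℝ) : Prop :=
  (∀ ω, 0 ≤ w ω) ∧ ∑ ω, w ω = 1

open scoped Classical in
/-- Probability that the random variable `X` takes the value `x`. -/
noncomputable def pr {Ω : Type} [Fintype Ω] (w : Ω → ℝ) {α : Type} (X : Ω → α) (x : α) : ℝ :=
  ∑ ω, if X ω = x then w ω else 0

/-- Shannon entropy (in bits) of the random variable `X`. -/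
noncomputable def H {Ω : Type} [Fintype Ω] (w : Ω → ℝ) {α : Type} [Fintype α] (X : Ω → α) : ℝ :=
  -∑ x, pr w X x * Real.logb 2 (pr w X x)

/-- Conditional entropy `H(X|Y)`. -/
noncomputable def condH {Ω : Type} [Fintype Ω] (w : Ω → ℝ) {α β : Type} [Fintype α] [Fintype β]
    (X : Ω → α) (Y : Ω → β) : ℝ :=
  H w (fun ω => (X ω, Y ω)) - H w Y

/-- Mutual information `I(X;Y)`. -/
noncomputable def MI {Ω : Type} [Fintype Ω] (w : Ω → ℝ) {α β : Type} [Fintype α] [Fintype β]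
    (X : Ω → α) (Y : Ω → β) : ℝ :=
  H w X + H w Y - H w (fun ω => (X ω, Y ω))

/-- Conditional mutual information `I(X;Y|Z)`. -/
noncomputable def cMI {Ω : Type} [Fintype Ω] (w : Ω → ℝ) {α β γ : Type}
    [Fintype α] [Fintype β] [Fintype γ] (X : Ω → α) (Y : Ω → β) (Z : Ω → γ) : ℝ :=
  condH w X Z - condH w X (fun ω => (Y ω, Z ω))

/-- `X` and `Y` are conditionally independent given `Z`, i.e. the Markov chain `X − Z − Y`. -/
def CondIndep {Ω : Type} [Fintype Ω] (w : Ω → ℝ) {α β γ : Type}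
    (X : Ω → α) (Y : Ω → β) (Z : Ω → γ) : Prop :=
  ∀ x y z, pr w (fun ω => (X ω, Y ω, Z ω)) (x, y, z) * pr w Z z =
    pr w (fun ω => (X ω, Z ω)) (x, z) * pr w (fun ω => (Y ω, Z ω)) (y, z)

section Entropy

open Real
open scoped Classical

variable {Ω α β γ : Type} [Fintype Ω] {w : Ω → ℝ}

lemma pr_nonneg (hw : ∀ ω, 0 ≤ w ω) (X : Ω → α) (a : α) : 0 ≤ pr w X a :=
  sum_nonneg fun ω _ => by split_ifs <;> simp [hw ω]

lemma pr_congr {X : Ω → α} {Y : Ω → β} {a : α} {b : β}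
    (h : ∀ ω, X ω = a ↔ Y ω = b) : pr w X a = pr w Y b :=
  sum_congr rfl fun ω _ => by simp only [h ω]

lemma pr_le_pr_comp (hw : ∀ ω, 0 ≤ w ω) (f : α → β) (X : Ω → α) (a : α) :
    pr w X a ≤ pr w (fun ω => f (X ω)) (f a) :=
  sum_le_sum fun ω _ => by split_ifs with h h' <;> simp_all

lemma pr_comp [Fintype α] (f : α → β) (X : Ω → α) (b : β) :
    pr w (fun ω => f (X ω)) b = ∑ a with f a = b, pr w X a := by
  unfold pr
  rw [sum_comm]
  refine sum_congr rfl fun ω _ => ?_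
  split_ifs with h <;> simp [h]

lemma sum_pr [Fintype α] (X : Ω → α) : ∑ a, pr w X a = ∑ ω, w ω := by
  unfold pr
  rw [sum_comm]
  simp

lemma sum_pr_prod_left [Fintype α] (X : Ω → α) (Y : Ω → β) (b : β) :
    ∑ a, pr w (fun ω => (X ω, Y ω)) (a, b) = pr w Y b := by
  unfold pr
  rw [sum_comm]
  refine sum_congr rfl fun ω _ => ?_
  simp [Prod.ext_iff, ite_and]

lemma H_comp_eq_sum [Fintype α] [Fintype β] (f : α → β) (X : Ω → α) :
    H w (fun ω => f (X ω)) = -∑ a, pr w X a * logb 2 (pr w (fun ω => f (X ω)) (f a)) := by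
  unfold H
  rw [← sum_fiberwise univ f]
  simp_rw [pr_comp f X, sum_mul]
  refine congrArg _ (sum_congr rfl fun b _ => sum_congr rfl fun a ha => ?_)
  rw [(mem_filter.1 ha).2]

lemma H_comp_of_injective [Fintype α] [Fintype β] {f : α → β} (hf : f.Injective)
    (X : Ω → α) :
    H w (fun ω => f (X ω)) = H w X := by
  rw [H_comp_eq_sum, H]
  congr 1
  exact sum_congr rfl fun a _ => by rw [pr_congr fun ω => hf.eq_iff]

lemma cMI_self_eq_zero [Fintype α] [Fintype β] (X : Ω → α) (Y : Ω → β) :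
    cMI w X Y Y = 0 := by
  have hXYY : H w (fun ω => (X ω, Y ω, Y ω)) = H w (fun ω => (X ω, Y ω)) :=
    H_comp_of_injective (f := fun t : α × β => (t.1, t.2, t.2))
      (Function.LeftInverse.injective (g := fun u => (u.1, u.2.1)) fun _ => rfl)
      (fun ω => (X ω, Y ω))
  have hYY : H w (fun ω => (Y ω, Y ω)) = H w Y :=
    H_comp_of_injective (f := fun b : β => (b, b))
      (Function.LeftInverse.injective (g := Prod.fst) fun _ => rfl) Y
  simp only [cMI, condH, hXYY, hYY]
  ring

lemma pr_comp_prod_self (f : γ → α) (Z : Ω → γ) (a : α) (c : γ) :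
    pr w (fun ω => (f (Z ω), Z ω)) (a, c) = if f c = a then pr w Z c else 0 := by
  unfold pr
  split_ifs with h
  · exact sum_congr rfl fun ω _ => by by_cases hZ : Z ω = c <;> simp [hZ, h]
  · exact sum_eq_zero fun ω _ => if_neg fun hZ => h <| by
      obtain ⟨rfl, rfl⟩ := Prod.ext_iff.1 hZ
      rfl

lemma condIndep_comp_cond (f : γ → α) (Y : Ω → β) (Z : Ω → γ) :
    CondIndep w (fun ω => f (Z ω)) Y Z := by
  intro a b c
  have hXYZ :=
    pr_comp_prod_self (w := w) (fun t : β × γ => f t.2) (fun ω => (Y ω, Z ω)) a (b, c)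
  dsimp only at hXYZ
  rw [hXYZ, pr_comp_prod_self]
  split_ifs <;> ring

lemma cMI_eq_sum [Fintype α] [Fintype β] [Fintype γ]
    (X : Ω → α) (Y : Ω → β) (Z : Ω → γ) :
    cMI w X Y Z = ∑ t : α × β × γ, pr w (fun ω => (X ω, Y ω, Z ω)) t *
      (logb 2 (pr w (fun ω => (X ω, Y ω, Z ω)) t) + logb 2 (pr w Z t.2.2)
        - logb 2 (pr w (fun ω => (X ω, Z ω)) (t.1, t.2.2))
        - logb 2 (pr w (fun ω => (Y ω, Z ω)) t.2)) := by
  have hXZ := H_comp_eq_sum (w := w) (fun t => (t.1, t.2.2)) (fun ω => (X ω, Y ω, Z ω))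
  have hYZ := H_comp_eq_sum (w := w) Prod.snd (fun ω => (X ω, Y ω, Z ω))
  have hZ := H_comp_eq_sum (w := w) (fun t => t.2.2) (fun ω => (X ω, Y ω, Z ω))
  dsimp only at hXZ hYZ hZ
  rw [cMI, condH, condH, hXZ, hYZ, hZ]
  simp only [H, mul_add, mul_sub, sum_add_distrib, sum_sub_distrib]
  ring

lemma sum_pr_mul_pr_div_pr [Fintype α] [Fintype β] [Fintype γ]
    (X : Ω → α) (Y : Ω → β) (Z : Ω → γ) :
    ∑ t : α × β × γ, pr w (fun ω => (X ω, Z ω)) (t.1, t.2.2) *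
      pr w (fun ω => (Y ω, Z ω)) t.2 / pr w Z t.2.2 = ∑ ω, w ω := by
  calc _ = ∑ c, (∑ a, pr w (fun ω => (X ω, Z ω)) (a, c)) *
        (∑ b, pr w (fun ω => (Y ω, Z ω)) (b, c)) / pr w Z c := by
        simp only [Fintype.sum_prod_type_right, sum_mul, mul_sum, sum_div]
    _ = ∑ c, pr w Z c * pr w Z c / pr w Z c := by simp only [sum_pr_prod_left]
    -- `x * x / x = x` holds also at `x = 0`, so null values of `Z` need no separate case.
    _ = ∑ ω, w ω := by simp only [mul_self_div_self, sum_pr]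

lemma sub_div_log_two_le_mul_logb {p q r s : ℝ} (hp : 0 ≤ p) (hq : p ≤ q) (hr : p ≤ r)
    (hs : p ≤ s) :
    (p - q * r / s) / log 2 ≤
      p * (logb 2 p + logb 2 s - logb 2 q - logb 2 r) := by
  have hlog2 : 0 < log 2 := log_pos one_lt_two
  obtain rfl | hp := hp.eq_or_lt
  · have hqrs : 0 ≤ q * r / s := div_nonneg (mul_nonneg hq hr) hs
    rw [zero_mul]
    exact div_nonpos_of_nonpos_of_nonneg (by linarith) hlog2.le
  have hq := hp.trans_le hq
  have hr := hp.trans_le hr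
  have hs := hp.trans_le hs
  have key : p - q * r / s ≤ p * log (p * s / (q * r)) := by
    have := one_sub_inv_le_log_of_pos (x := p * s / (q * r)) (by positivity)
    calc p - q * r / s = p * (1 - (p * s / (q * r))⁻¹) := by field_simp
      _ ≤ _ := mul_le_mul_of_nonneg_left this hp.le
  rw [log_div (by positivity) (by positivity), log_mul hp.ne' hs.ne',
    log_mul hq.ne' hr.ne'] at key
  calc (p - q * r / s) / log 2
      ≤ p * (log p + log s - (log q + log r)) / log 2 := by gcongr
    _ = _ := by simp only [logb]; ring

lemma mul_logb_eq_zero_of_mul_eq_mul {p q r s : ℝ} (hp : 0 ≤ p) (hq : p ≤ q) (hr : p ≤ r)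
    (hs : p ≤ s) (h : p * s = q * r) :
    p * (logb 2 p + logb 2 s - logb 2 q - logb 2 r) = 0 := by
  obtain rfl | hp := hp.eq_or_lt
  · rw [zero_mul]
  have hq := hp.trans_le hq
  have hr := hp.trans_le hr
  have hs := hp.trans_le hs
  have hlog : logb 2 p + logb 2 s = logb 2 q + logb 2 r := by
    rw [← logb_mul hp.ne' hs.ne', ← logb_mul hq.ne' hr.ne', h]
  linear_combination p * hlog

lemma cMI_nonneg [Fintype α] [Fintype β] [Fintype γ] (hw : ∀ ω, 0 ≤ w ω)
    (X : Ω → α) (Y : Ω → β) (Z : Ω → γ) : 0 ≤ cMI w X Y Z := by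
  rw [cMI_eq_sum]
  calc (0 : ℝ) = (∑ t : α × β × γ, pr w (fun ω => (X ω, Y ω, Z ω)) t
        - ∑ t : α × β × γ, pr w (fun ω => (X ω, Z ω)) (t.1, t.2.2) *
          pr w (fun ω => (Y ω, Z ω)) t.2 / pr w Z t.2.2) / log 2 := by
        rw [sum_pr, sum_pr_mul_pr_div_pr, sub_self, zero_div]
    _ = _ := by rw [← sum_sub_distrib, sum_div]
    _ ≤ _ := sum_le_sum fun t _ => sub_div_log_two_le_mul_logb (pr_nonneg hw _ t)
        (pr_le_pr_comp hw (fun t => (t.1, t.2.2)) _ t) (pr_le_pr_comp hw Prod.snd _ t)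
        (pr_le_pr_comp hw (fun t => t.2.2) _ t)

lemma cMI_eq_zero_of_condIndep [Fintype α] [Fintype β] [Fintype γ] (hw : ∀ ω, 0 ≤ w ω)
    {X : Ω → α} {Y : Ω → β} {Z : Ω → γ} (h : CondIndep w X Y Z) : cMI w X Y Z = 0 := by
  rw [cMI_eq_sum]
  exact sum_eq_zero fun t _ => mul_logb_eq_zero_of_mul_eq_mul (pr_nonneg hw _ t)
    (pr_le_pr_comp hw (fun t => (t.1, t.2.2)) _ t) (pr_le_pr_comp hw Prod.snd _ t)
    (pr_le_pr_comp hw (fun t => t.2.2) _ t) (h t.1 t.2.1 t.2.2)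

lemma cMI_sub_cMI_eq {κ : Type} [Fintype α] [Fintype β] [Fintype γ] [Fintype κ]
    (A : Ω → α) (B : Ω → β) (E : Ω → γ) (U : Ω → κ) :
    cMI w A B U - cMI w A E U = cMI w A B E - cMI w A E (fun ω => (B ω, U ω))
      - cMI w U B E + cMI w U B (fun ω => (A ω, E ω)) := by
  have hAEBU :
      H w (fun ω => (A ω, E ω, B ω, U ω)) = H w (fun ω => (U ω, B ω, A ω, E ω)) :=
    H_comp_of_injective (f := fun t : κ × β × α × γ => (t.2.2.1, t.2.2.2, t.2.1, t.1))
      (Function.LeftInverse.injective (g := fun t => (t.2.2.2, t.2.2.1, t.1, t.2.1))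
        fun _ => rfl) (fun ω => (U ω, B ω, A ω, E ω))
  have hEBU : H w (fun ω => (E ω, B ω, U ω)) = H w (fun ω => (U ω, B ω, E ω)) :=
    H_comp_of_injective (f := fun t : κ × β × γ => (t.2.2, t.2.1, t.1))
      (Function.LeftInverse.injective (g := fun t => (t.2.2, t.2.1, t.1)) fun _ => rfl)
      (fun ω => (U ω, B ω, E ω))
  have hUE : H w (fun ω => (U ω, E ω)) = H w (fun ω => (E ω, U ω)) :=
    H_comp_of_injective (f := Prod.swap) Prod.swap_injective (fun ω => (E ω, U ω))
  have hUAE : H w (fun ω => (U ω, A ω, E ω)) = H w (fun ω => (A ω, E ω, U ω)) :=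
    H_comp_of_injective (f := fun t : α × γ × κ => (t.2.2, t.1, t.2.1))
      (Function.LeftInverse.injective (g := fun t => (t.2.1, t.2.2, t.1)) fun _ => rfl)
      (fun ω => (A ω, E ω, U ω))
  have hBAE : H w (fun ω => (B ω, A ω, E ω)) = H w (fun ω => (A ω, B ω, E ω)) :=
    H_comp_of_injective (f := fun t : α × β × γ => (t.2.1, t.1, t.2.2))
      (Function.LeftInverse.injective (g := fun t => (t.2.1, t.1, t.2.2)) fun _ => rfl)
      (fun ω => (A ω, B ω, E ω))
  simp only [cMI, condH, hAEBU, hEBU, hUE, hUAE, hBAE]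
  ring

end Entropy

theorem stmt19 {Ω α β γ : Type} [Fintype Ω] [Fintype α] [Fintype β] [Fintype γ]
    (w : Ω → ℝ) (hw : IsPMF w) (A : Ω → α) (B : Ω → β) (E : Ω → γ) :
    (∀ (κ : Type) [Fintype κ] (U : Ω → κ),
        CondIndep w U B (fun ω => (A ω, E ω)) →
        cMI w A B U - cMI w A E U ≤ cMI w A B E) ∧
    CondIndep w E B (fun ω => (A ω, E ω)) ∧
    cMI w A B E - cMI w A E E = cMI w A B E := by
  refine ⟨fun κ _ U hU => ?_, condIndep_comp_cond Prod.snd B fun ω => (A ω, E ω),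
    by rw [cMI_self_eq_zero, sub_zero]⟩
  have hAEBU := cMI_nonneg hw.1 A E (fun ω => (B ω, U ω))
  have hUBE := cMI_nonneg hw.1 U B E
  have hMarkov := cMI_eq_zero_of_condIndep hw.1 hU
  linarith [cMI_sub_cMI_eq (w := w) A B E U]
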